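/- Let f ∈ R[x_1,...,x_n] and R ∈ O(n). Then the leading principal n×n submatrix of the polynomial-weighted covariance of the homogenization of R•f equals R^T M R, where M is the leading principal n×n submatrix of the polynomial-weighted covariance of the homogenization of f. In symbols: Cov((R•f)‾)_{1:n,1:n} = R^T Cov(f̄)_{1:n,1:n} R. -/

import Mathlib

open Matrix

open MeasureTheory Metric MvPolynomial

open scoped Pointwise

/-- Polynomial-weighted covariance matrix: Cov(g) = ∫_{Sᵐ⁻¹} g(x)² x xᵀ dμ(x). -/
noncomputable def pwCov {n : ℕ} (f : (Fin n → ℝ) → ℝ) : Matrix (Fin n) (Fin n) ℝ :=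
  Matrix.of fun i j =>
    ∫ x : Metric.sphere (0 : EuclideanSpace ℝ (Fin n)) 1,
      (f (fun k => (x : EuclideanSpace ℝ (Fin n)) k))^2 * (x : EuclideanSpace ℝ (Fin n)) i
        * (x : EuclideanSpace ℝ (Fin n)) j ∂ (MeasureTheory.volume.toSphere)

/-- Degree-d homogenization as a function: f̄(x₁,…,xₙ₊₁) = xₙ₊₁^d · f(x₁/xₙ₊₁,…,xₙ/xₙ₊₁). -/
noncomputable def homog {n : ℕ} (d : ℕ) (f : (Fin n → ℝ) → ℝ) : (Fin (n + 1) → ℝ) → ℝ :=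
  fun x => (x (Fin.last n)) ^ d * f (fun i => x i.castSucc / x (Fin.last n))

section sphereAux

variable {m : ℕ}

lemma mem_sphere_map (e : EuclideanSpace ℝ (Fin m) ≃ₗᵢ[ℝ] EuclideanSpace ℝ (Fin m))
    (x : sphere (0 : EuclideanSpace ℝ (Fin m)) 1) :
    e x ∈ sphere (0 : EuclideanSpace ℝ (Fin m)) 1 := by
  have := x.2
  simp only [mem_sphere_iff_norm, sub_zero] at this ⊢
  simp [this]

/-- A measurable equiv of the unit sphere induced by a linear isometry equiv. -/
noncomputable def sphereMapOf (e : EuclideanSpace ℝ (Fin m) ≃ₗᵢ[ℝ] EuclideanSpace ℝ (Fin m)) :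
    sphere (0 : EuclideanSpace ℝ (Fin m)) 1 ≃ᵐ sphere (0 : EuclideanSpace ℝ (Fin m)) 1 where
  toFun x := ⟨e x, mem_sphere_map e x⟩
  invFun x := ⟨e.symm x, mem_sphere_map e.symm x⟩
  left_inv x := Subtype.ext (e.symm_apply_apply x)
  right_inv x := Subtype.ext (e.apply_symm_apply x)
  measurable_toFun :=
    Measurable.subtype_mk (e.continuous.measurable.comp measurable_subtype_coe)
  measurable_invFun :=
    Measurable.subtype_mk (e.symm.continuous.measurable.comp measurable_subtype_coe)

lemma preimage_measure_eq (e : EuclideanSpace ℝ (Fin m) ≃ₗᵢ[ℝ] EuclideanSpace ℝ (Fin m))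
    (B : Set (EuclideanSpace ℝ (Fin m))) : volume (⇑e ⁻¹' B) = volume B := by
  calc volume (⇑e ⁻¹' B) = volume (⇑e.toHomeomorph.toMeasurableEquiv ⁻¹' B) := rfl
    _ = Measure.map e.toHomeomorph.toMeasurableEquiv volume B := (e.toHomeomorph.toMeasurableEquiv.map_apply B).symm
    _ = volume B := by
        rw [show (Measure.map e.toHomeomorph.toMeasurableEquiv volume) = Measure.map e volume from rfl,
          e.measurePreserving.map_eq]

lemma map_toSphere (e : EuclideanSpace ℝ (Fin m) ≃ₗᵢ[ℝ] EuclideanSpace ℝ (Fin m)) :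
    Measure.map (sphereMapOf e) volume.toSphere = volume.toSphere := by
  apply Measure.ext
  intro s hs
  have hms : MeasurableSet ((sphereMapOf e) ⁻¹' s) := (sphereMapOf e).measurable hs
  rw [Measure.map_apply (sphereMapOf e).measurable hs,
    Measure.toSphere_apply' _ hms, Measure.toSphere_apply' _ hs]
  congr 1
  have h1 : (Subtype.val '' ((sphereMapOf e) ⁻¹' s))
      = ⇑e ⁻¹' (Subtype.val '' s) := by
    ext y
    constructor
    · rintro ⟨z, hz, rfl⟩
      exact ⟨_, hz, rfl⟩
    · rintro ⟨w, hw, hwy⟩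
      have hy : y ∈ sphere (0 : EuclideanSpace ℝ (Fin m)) 1 := by
        have hw2 := w.2
        simp only [mem_sphere_iff_norm, sub_zero] at hw2 ⊢
        have : ‖e y‖ = 1 := by rw [← hwy]; exact hw2
        simpa using this
      refine ⟨⟨y, hy⟩, ?_, rfl⟩
      show (sphereMapOf e) ⟨y, hy⟩ ∈ s
      have : (sphereMapOf e) ⟨y, hy⟩ = w := Subtype.ext hwy.symm
      rw [this]; exact hw
  rw [h1]
  have h2 : Set.Ioo (0:ℝ) 1 • (⇑e ⁻¹' (Subtype.val '' s))
      = ⇑e ⁻¹' (Set.Ioo (0:ℝ) 1 • (Subtype.val '' s)) := by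
    ext y
    constructor
    · rintro ⟨r, hr, a, ha, rfl⟩
      exact ⟨r, hr, e a, ha, by simp [e.map_smul]⟩
    · rintro ⟨r, hr, a, ha, hra⟩
      refine ⟨r, hr, e.symm a, by simpa using ha, ?_⟩
      show r • e.symm a = y
      apply e.injective
      rw [e.map_smul, e.apply_symm_apply]
      exact hra
  rw [h2, preimage_measure_eq]

end sphereAux

section rot

variable {n : ℕ}

lemma mulVec_dot (R : Matrix (Fin n) (Fin n) ℝ) (hR : Rᵀ * R = 1) (v : Fin n → ℝ) :
    R.mulVec v ⬝ᵥ R.mulVec v = v ⬝ᵥ v := by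
  rw [dotProduct_mulVec, ← mulVec_transpose, mulVec_mulVec, hR, one_mulVec]

lemma sum_sq_mulVec (R : Matrix (Fin n) (Fin n) ℝ) (hR : Rᵀ * R = 1) (v : Fin n → ℝ) :
    ∑ i, (R.mulVec v i) ^ 2 = ∑ i, (v i) ^ 2 := by
  have := mulVec_dot R hR v
  simpa [dotProduct, sq] using this

/-- The rotation of ℝ^{n+1} acting by R on the first n coordinates. -/
noncomputable def rotLast (R : Matrix (Fin n) (Fin n) ℝ) :
    (Fin (n + 1) → ℝ) → (Fin (n + 1) → ℝ) :=
  fun x => Fin.snoc (R.mulVec (fun i => x i.castSucc)) (x (Fin.last n))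

lemma rotLast_castSucc (R : Matrix (Fin n) (Fin n) ℝ) (x : Fin (n + 1) → ℝ) (i : Fin n) :
    rotLast R x i.castSucc = R.mulVec (fun k => x k.castSucc) i := by
  simp [rotLast]

lemma rotLast_last (R : Matrix (Fin n) (Fin n) ℝ) (x : Fin (n + 1) → ℝ) :
    rotLast R x (Fin.last n) = x (Fin.last n) := by
  simp [rotLast]

lemma rotLast_rotLast {R S : Matrix (Fin n) (Fin n) ℝ} (h : S * R = 1) (x : Fin (n + 1) → ℝ) :
    rotLast S (rotLast R x) = x := by
  funext i
  induction i using Fin.lastCases with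
  | last => rw [rotLast_last, rotLast_last]
  | cast i =>
    rw [rotLast_castSucc]
    have : (fun k => rotLast R x k.castSucc) = R.mulVec (fun k => x k.castSucc) := by
      funext k; exact rotLast_castSucc R x k
    rw [this, mulVec_mulVec, h, one_mulVec]

noncomputable def rotEquiv (R : Matrix (Fin n) (Fin n) ℝ) (hR : Rᵀ * R = 1) :
    EuclideanSpace ℝ (Fin (n + 1)) ≃ₗᵢ[ℝ] EuclideanSpace ℝ (Fin (n + 1)) where
  toFun x := WithLp.toLp 2 (rotLast R x)
  invFun x := WithLp.toLp 2 (rotLast Rᵀ x)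
  left_inv x := WithLp.ofLp_injective 2 (rotLast_rotLast hR x)
  right_inv x := WithLp.ofLp_injective 2 (rotLast_rotLast (mul_eq_one_comm.mp hR) x)
  map_add' x y := by
    apply WithLp.ofLp_injective 2
    funext i
    induction i using Fin.lastCases with
    | last =>
      show rotLast R (x + y) (Fin.last n) = rotLast R x (Fin.last n) + rotLast R y (Fin.last n)
      rw [rotLast_last, rotLast_last, rotLast_last]; rfl
    | cast i =>
      show rotLast R (x + y) i.castSucc = rotLast R x i.castSucc + rotLast R y i.castSucc
      rw [rotLast_castSucc, rotLast_castSucc, rotLast_castSucc]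
      have : (fun k : Fin n => (WithLp.ofLp x + WithLp.ofLp y) k.castSucc)
          = (fun k : Fin n => x k.castSucc) + (fun k : Fin n => y k.castSucc) := rfl
      rw [this, Matrix.mulVec_add]
      rfl
  map_smul' c x := by
    apply WithLp.ofLp_injective 2
    funext i
    induction i using Fin.lastCases with
    | last =>
      show rotLast R (c • x) (Fin.last n) = c * rotLast R x (Fin.last n)
      rw [rotLast_last, rotLast_last]; rfl
    | cast i =>
      show rotLast R (c • x) i.castSucc = c * rotLast R x i.castSucc
      rw [rotLast_castSucc, rotLast_castSucc]
      have : (fun k : Fin n => (c • WithLp.ofLp x) k.castSucc) = c • (fun k : Fin n => x k.castSucc) := rfl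
      rw [this, Matrix.mulVec_smul]
      rfl
  norm_map' x := by
    rw [EuclideanSpace.norm_eq, EuclideanSpace.norm_eq]
    congr 1
    have h1 : ∀ y : EuclideanSpace ℝ (Fin (n+1)), ∑ i, ‖y i‖ ^ 2
        = (∑ i : Fin n, (y i.castSucc) ^ 2) + (y (Fin.last n)) ^ 2 := by
      intro y
      simp only [Real.norm_eq_abs, sq_abs]
      exact Fin.sum_univ_castSucc (fun i => (y i) ^ 2)
    rw [h1, h1]
    show (∑ i : Fin n, (rotLast R x) i.castSucc ^ 2) + (rotLast R x) (Fin.last n) ^ 2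
      = (∑ i : Fin n, x i.castSucc ^ 2) + x (Fin.last n) ^ 2
    simp only [rotLast_castSucc, rotLast_last]
    rw [sum_sq_mulVec R hR]

lemma rotEquiv_apply (R : Matrix (Fin n) (Fin n) ℝ) (hR : Rᵀ * R = 1)
    (x : EuclideanSpace ℝ (Fin (n + 1))) : rotEquiv R hR x = rotLast R x := rfl

end rot

section bound

variable {n : ℕ}

lemma coord_abs_le {m : ℕ} (x : EuclideanSpace ℝ (Fin m)) (i : Fin m) : |x i| ≤ ‖x‖ := by
  rw [EuclideanSpace.norm_eq, ← Real.sqrt_sq_eq_abs]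
  apply Real.sqrt_le_sqrt
  calc x i ^ 2 = ‖x i‖ ^ 2 := by rw [Real.norm_eq_abs, sq_abs]
    _ ≤ ∑ j, ‖x j‖ ^ 2 :=
      Finset.single_le_sum (f := fun j => ‖x j‖ ^ 2) (fun j _ => sq_nonneg _) (Finset.mem_univ i)

lemma homog_abs_le (f : MvPolynomial (Fin n) ℝ) (x : EuclideanSpace ℝ (Fin (n + 1)))
    (hx : ‖x‖ = 1) :
    |homog f.totalDegree (fun y => eval y f) x| ≤ ∑ m ∈ f.support, |coeff m f| := by
  set d := f.totalDegree with hd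
  set B := ∑ m ∈ f.support, |coeff m f| with hBdef
  have hB0 : 0 ≤ B := Finset.sum_nonneg fun _ _ => abs_nonneg _
  have habs : ∀ m, |coeff m f| ≤ B := by
    intro m
    by_cases hm : coeff m f = 0
    · rw [hm, abs_zero]; exact hB0
    · exact Finset.single_le_sum (f := fun p => |coeff p f|)
        (fun _ _ => abs_nonneg _) (mem_support_iff.2 hm)
  have hxi : ∀ i, |x i| ≤ 1 := fun i => (coord_abs_le x i).trans (le_of_eq hx)
  by_cases h0 : x (Fin.last n) = 0
  · rcases Nat.eq_zero_or_pos d with hd0 | hd0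
    · simp only [homog, h0, hd0, pow_zero, one_mul]
      have : (fun i : Fin n => x i.castSucc / (0:ℝ)) = fun _ => 0 := by
        funext i; simp
      rw [this]
      have : eval (fun _ : Fin n => (0:ℝ)) f = coeff 0 f := by
        rw [eval_zero']; rfl
      rw [this]
      exact habs 0
    · simp only [homog, h0, zero_pow (Nat.pos_iff_ne_zero.mp hd0), zero_mul, abs_zero]
      exact hB0
  · set t := |x (Fin.last n)| with ht
    have ht0 : 0 < t := abs_pos.2 h0
    have ht1 : t ≤ 1 := hxi _
    simp only [homog]
    rw [eval_eq']
    have claim : ∀ m ∈ f.support,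
        t ^ d * |coeff m f * ∏ i, (x i.castSucc / x (Fin.last n)) ^ m i| ≤ |coeff m f| := by
      intro m hm
      have hDd : (∑ i, m i) ≤ d := by
        have h1 : m.sum (fun _ e => e) ≤ d := le_totalDegree hm
        have h2 : m.sum (fun _ e => e) = ∑ i, m i := by
          rw [Finsupp.sum_fintype]
          intro i; rfl
        omega
      have key : t ^ d * ∏ i, (|x i.castSucc| / t) ^ m i ≤ 1 := by
        have hP : ∏ i, (|x i.castSucc| / t) ^ m i ≤ ∏ i, ((1:ℝ) / t) ^ m i := by
          gcongr with i
          exact hxi _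
        have hP2 : ∏ i, ((1:ℝ) / t) ^ m i = (1 / t) ^ (∑ i, m i) := by
          rw [Finset.prod_pow_eq_pow_sum]
        calc t ^ d * ∏ i, (|x i.castSucc| / t) ^ m i
            ≤ t ^ d * (1 / t) ^ (∑ i, m i) := by
              rw [← hP2]
              exact mul_le_mul_of_nonneg_left hP (pow_nonneg ht0.le _)
          _ = t ^ d / t ^ (∑ i, m i) := by
              rw [one_div, inv_pow, ← div_eq_mul_inv]
          _ ≤ 1 := by
              rw [div_le_one (pow_pos ht0 _)]
              exact pow_le_pow_of_le_one ht0.le ht1 hDd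
      calc t ^ d * |coeff m f * ∏ i, (x i.castSucc / x (Fin.last n)) ^ m i|
          = |coeff m f| * (t ^ d * ∏ i, (|x i.castSucc| / t) ^ m i) := by
            rw [abs_mul, Finset.abs_prod]
            simp only [abs_pow, abs_div, ← ht]
            ring
        _ ≤ |coeff m f| * 1 := mul_le_mul_of_nonneg_left key (abs_nonneg _)
        _ = |coeff m f| := mul_one _
    calc |x (Fin.last n) ^ d * ∑ m ∈ f.support, coeff m f
            * ∏ i, (x i.castSucc / x (Fin.last n)) ^ m i|
        = t ^ d * |∑ m ∈ f.support, coeff m f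
            * ∏ i, (x i.castSucc / x (Fin.last n)) ^ m i| := by
          rw [abs_mul, abs_pow]
      _ ≤ t ^ d * ∑ m ∈ f.support, |coeff m f
            * ∏ i, (x i.castSucc / x (Fin.last n)) ^ m i| :=
          mul_le_mul_of_nonneg_left (Finset.abs_sum_le_sum_abs _ _) (pow_nonneg ht0.le _)
      _ = ∑ m ∈ f.support, t ^ d * |coeff m f
            * ∏ i, (x i.castSucc / x (Fin.last n)) ^ m i| := Finset.mul_sum _ _ _
      _ ≤ ∑ m ∈ f.support, |coeff m f| := Finset.sum_le_sum claim

lemma homog_measurable (f : MvPolynomial (Fin n) ℝ) :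
    Measurable fun x : EuclideanSpace ℝ (Fin (n + 1)) =>
      homog f.totalDegree (fun y => eval y f) x := by
  have hc : ∀ i : Fin (n + 1),
      Measurable fun x : EuclideanSpace ℝ (Fin (n + 1)) => x i := fun i =>
    (EuclideanSpace.proj (𝕜 := ℝ) i).continuous.measurable
  have hdiv : Measurable fun x : EuclideanSpace ℝ (Fin (n + 1)) =>
      (fun i : Fin n => x i.castSucc / x (Fin.last n)) :=
    measurable_pi_lambda _ fun i => (hc _).div (hc _)
  exact ((hc (Fin.last n)).pow_const _).mul
    ((MvPolynomial.continuous_eval (p := f)).measurable.comp hdiv)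

lemma integrand_integrable (f : MvPolynomial (Fin n) ℝ) (k l : Fin (n + 1)) :
    Integrable (fun y : sphere (0 : EuclideanSpace ℝ (Fin (n + 1))) 1 =>
      (homog f.totalDegree (fun v => eval v f)
          (fun a => (y : EuclideanSpace ℝ (Fin (n + 1))) a)) ^ 2
        * (y : EuclideanSpace ℝ (Fin (n + 1))) k
        * (y : EuclideanSpace ℝ (Fin (n + 1))) l)
      volume.toSphere := by
  set B := ∑ m ∈ f.support, |coeff m f| with hBdef
  have hB0 : 0 ≤ B := Finset.sum_nonneg fun _ _ => abs_nonneg _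
  have hmeas : Measurable fun y : sphere (0 : EuclideanSpace ℝ (Fin (n + 1))) 1 =>
      (homog f.totalDegree (fun v => eval v f)
          (fun a => (y : EuclideanSpace ℝ (Fin (n + 1))) a)) ^ 2
        * (y : EuclideanSpace ℝ (Fin (n + 1))) k
        * (y : EuclideanSpace ℝ (Fin (n + 1))) l := by
    have h1 : Measurable fun y : sphere (0 : EuclideanSpace ℝ (Fin (n + 1))) 1 =>
        (y : EuclideanSpace ℝ (Fin (n + 1))) := measurable_subtype_coe
    have h2 := (homog_measurable f).comp h1
    have h3 : ∀ i : Fin (n + 1),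
        Measurable fun y : sphere (0 : EuclideanSpace ℝ (Fin (n + 1))) 1 =>
          (y : EuclideanSpace ℝ (Fin (n + 1))) i := fun i =>
      ((EuclideanSpace.proj (𝕜 := ℝ) i).continuous.measurable).comp h1
    exact ((h2.pow_const 2).mul (h3 k)).mul (h3 l)
  refine Integrable.mono' (integrable_const (B ^ 2)) hmeas.aestronglyMeasurable ?_
  refine Filter.Eventually.of_forall fun y => ?_
  have hy : ‖(y : EuclideanSpace ℝ (Fin (n + 1)))‖ = 1 := by
    have := y.2
    simpa [mem_sphere_iff_norm] using this
  have hb := homog_abs_le f y hy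
  have hxi : ∀ i, |(y : EuclideanSpace ℝ (Fin (n + 1))) i| ≤ 1 := fun i =>
    (coord_abs_le _ i).trans (le_of_eq hy)
  have hco : (fun a => (y : EuclideanSpace ℝ (Fin (n + 1))) a)
      = (y : EuclideanSpace ℝ (Fin (n + 1))) := rfl
  rw [Real.norm_eq_abs, abs_mul, abs_mul, hco]
  calc |homog f.totalDegree (fun v => eval v f) (y : EuclideanSpace ℝ (Fin (n + 1))) ^ 2|
        * |(y : EuclideanSpace ℝ (Fin (n + 1))) k| * |(y : EuclideanSpace ℝ (Fin (n + 1))) l|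
      ≤ B ^ 2 * 1 * 1 := by
        have h1 : |homog f.totalDegree (fun v => eval v f)
            (y : EuclideanSpace ℝ (Fin (n + 1))) ^ 2| ≤ B ^ 2 := by
          rw [abs_pow]
          exact pow_le_pow_left₀ (abs_nonneg _) hb 2
        gcongr <;> [exact hxi k; exact hxi l]
    _ = B ^ 2 := by ring

end bound

section ptwise

variable {n : ℕ}

lemma homog_rot (f : MvPolynomial (Fin n) ℝ) (R : Matrix (Fin n) (Fin n) ℝ)
    (x : Fin (n + 1) → ℝ) :
    homog f.totalDegree (fun y => eval (R.mulVec y) f) x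
      = homog f.totalDegree (fun y => eval y f) (rotLast R x) := by
  simp only [homog, rotLast_last]
  congr 1
  have h1 : (fun i : Fin n => x i.castSucc / x (Fin.last n))
      = (x (Fin.last n))⁻¹ • (fun i : Fin n => x i.castSucc) := by
    funext i
    simp [div_eq_inv_mul]
  have harg : (R.mulVec fun i : Fin n => x i.castSucc / x (Fin.last n))
      = fun i : Fin n => rotLast R x i.castSucc / x (Fin.last n) := by
    rw [h1, Matrix.mulVec_smul]
    funext i
    rw [rotLast_castSucc]
    simp [div_eq_inv_mul]
  rw [harg]

lemma coord_rot (R : Matrix (Fin n) (Fin n) ℝ) (hR : Rᵀ * R = 1)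
    (x : Fin (n + 1) → ℝ) (i : Fin n) :
    x i.castSucc = ∑ k, R k i * rotLast R x k.castSucc := by
  have h : Rᵀ.mulVec (R.mulVec (fun a => x a.castSucc)) = fun a => x a.castSucc := by
    rw [mulVec_mulVec, hR, one_mulVec]
  have h2 := congrFun h i
  rw [← h2]
  simp only [Matrix.mulVec, dotProduct, Matrix.transpose_apply, rotLast_castSucc]

end ptwise

/-- Cov((R•f)‾)_{1:n,1:n} = Rᵀ Cov(f̄)_{1:n,1:n} R. -/
theorem pwCov_homog_orthogonal_equivariant {n : ℕ} (f : MvPolynomial (Fin n) ℝ)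
    (R : Matrix (Fin n) (Fin n) ℝ) (hR : Rᵀ * R = 1) :
    (pwCov (homog f.totalDegree (fun y => eval (R.mulVec y) f))).submatrix
        Fin.castSucc Fin.castSucc
      = Rᵀ * (pwCov (homog f.totalDegree (fun y => eval y f))).submatrix
          Fin.castSucc Fin.castSucc * R := by
  classical
  set d := f.totalDegree with hd
  set g : (Fin n → ℝ) → ℝ := fun y => eval y f with hg
  set E := EuclideanSpace ℝ (Fin (n + 1))
  set μ : Measure (sphere (0 : E) 1) := volume.toSphere with hμ
  set e := rotEquiv R hR with he
  set T := sphereMapOf e with hT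
  ext i j
  simp only [Matrix.submatrix_apply, Matrix.mul_apply, pwCov, Matrix.of_apply]
  -- abbreviation for the basic integrand
  set G : Fin (n + 1) → Fin (n + 1) → (sphere (0 : E) 1) → ℝ := fun k l y =>
    (homog d g (fun a => (y : E) a)) ^ 2 * (y : E) k * (y : E) l with hG
  have hGint : ∀ k l, Integrable (G k l) μ := fun k l => integrand_integrable f k l
  -- the function after transforming
  set F : (sphere (0 : E) 1) → ℝ := fun y =>
    (homog d g (fun a => (y : E) a)) ^ 2
      * (∑ k, R k i * (y : E) k.castSucc) * (∑ l, R l j * (y : E) l.castSucc) with hF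
  have hpt : ∀ x : sphere (0 : E) 1,
      (homog d (fun y => eval (R.mulVec y) f) (fun a => (x : E) a)) ^ 2
        * (x : E) i.castSucc * (x : E) j.castSucc = F (T x) := by
    intro x
    have hcoe : ((T x : E) : Fin (n + 1) → ℝ) = rotLast R (fun a => (x : E) a) := rfl
    rw [hF]
    simp only [hcoe]
    rw [← homog_rot f R (fun a => (x : E) a)]
    rw [← coord_rot R hR (fun a => (x : E) a) i, ← coord_rot R hR (fun a => (x : E) a) j]
  calc (∫ x : sphere (0 : E) 1,
        (homog d (fun y => eval (R.mulVec y) f) (fun a => (x : E) a)) ^ 2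
          * (x : E) i.castSucc * (x : E) j.castSucc ∂μ)
      = ∫ x, F (T x) ∂μ := by
        apply integral_congr_ae
        exact Filter.Eventually.of_forall hpt
    _ = ∫ y, F y ∂μ := by
        rw [← MeasureTheory.integral_map_equiv T F, hT, map_toSphere]
    _ = ∫ y, ∑ k, ∑ l, R k i * R l j * G k.castSucc l.castSucc y ∂μ := by
        apply integral_congr_ae
        refine Filter.Eventually.of_forall fun y => ?_
        rw [hF, hG]
        simp only [Finset.mul_sum, Finset.sum_mul]
        rw [Finset.sum_comm]
        apply Finset.sum_congr rfl
        intro k _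
        apply Finset.sum_congr rfl
        intro l _
        ring
    _ = ∑ k, ∑ l, R k i * R l j * ∫ y, G k.castSucc l.castSucc y ∂μ := by
        rw [integral_finset_sum]
        · apply Finset.sum_congr rfl
          intro k _
          rw [integral_finset_sum]
          · apply Finset.sum_congr rfl
            intro l _
            rw [integral_const_mul]
          · intro l _
            exact (hGint k.castSucc l.castSucc).const_mul _
        · intro k _
          apply integrable_finset_sum
          intro l _
          exact (hGint k.castSucc l.castSucc).const_mul _
    _ = ∑ l, (∑ k, Rᵀ i k * (∫ y, G k.castSucc l.castSucc y ∂μ)) * R l j := by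
        rw [Finset.sum_comm]
        apply Finset.sum_congr rfl
        intro l _
        rw [Finset.sum_mul]
        apply Finset.sum_congr rfl
        intro k _
        rw [Matrix.transpose_apply]
        ring
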